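/- arXiv:2605.29426 — 3 statements merged into one kernel-verified Lean document; each statement's English description precedes it below -/
import Mathlib

section
/- Let δ_1,…,δ_b be 4-wise independent Rademacher random variables, μ_1,…,μ_b ∈ ℝ^L with Σ_i ‖μ_i‖² = ρ², and H an orthogonal b×b matrix with all entries ±1/√b. Define Z_r = ‖Σ_i H_{r,i} δ_i μ_i‖² for r ∈ [b]. Then for all r_1, r_2, E[Z_{r_1} Z_{r_2}] ≤ 3ρ⁴/b². -/
/-!
With `G = μ μᵀ` the Gram matrix of the `μ_i`, each `Z_r` is the quadratic form
`∑ H_{r,i} H_{r,i'} δ_i δ_{i'} G_{i,i'}`, so `Z_{r₁} Z_{r₂}` is a quartic form in the signs.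
In expectation only the index quadruples that pair up survive; bounding the three pairings
separately in absolute value, every product of four entries of `H` contributes `1/b²`, and each
pairing sum is at most `(tr G)² = ρ⁴`: the diagonal pairing with equality, the two crossed ones
by Cauchy–Schwarz, `G_{ik}² ≤ G_{ii} G_{kk}`.
-/

open MeasureTheory Finset Matrix

lemma pairs_up_of_even_count {α : Type*} [DecidableEq α] (i₁ i₂ i₃ i₄ : α)
    (h : ∀ x, Even (({i₁, i₂, i₃, i₄} : Multiset α).count x)) :
    (i₁ = i₂ ∧ i₃ = i₄) ∨ (i₁ = i₃ ∧ i₂ = i₄) ∨ (i₁ = i₄ ∧ i₂ = i₃) := by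
  have c₁ := h i₁; have c₂ := h i₂; have c₃ := h i₃
  simp only [Multiset.insert_eq_cons, Multiset.count_cons, Multiset.count_singleton,
    Nat.even_iff] at c₁ c₂ c₃
  split_ifs at c₁ c₂ c₃ <;> grind

lemma sum_mul_ite_le_sum_abs_pairings {ι : Type*} [Fintype ι] [DecidableEq ι]
    (p : ι → ι → ι → ι → Prop) [∀ i₁ i₂ i₃ i₄, Decidable (p i₁ i₂ i₃ i₄)]
    (hp : ∀ i₁ i₂ i₃ i₄, p i₁ i₂ i₃ i₄ →
      (i₁ = i₂ ∧ i₃ = i₄) ∨ (i₁ = i₃ ∧ i₂ = i₄) ∨ (i₁ = i₄ ∧ i₂ = i₃))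
    (c : ι → ι → ι → ι → ℝ) :
    ∑ i₁, ∑ i₂, ∑ i₃, ∑ i₄, c i₁ i₂ i₃ i₄ * (if p i₁ i₂ i₃ i₄ then 1 else 0) ≤
      ∑ i, ∑ k, |c i i k k| + ∑ i, ∑ k, |c i k i k| + ∑ i, ∑ k, |c i k k i| := by
  calc _ ≤ ∑ i₁, ∑ i₂, ∑ i₃, ∑ i₄, |c i₁ i₂ i₃ i₄| *
        ((if i₁ = i₂ ∧ i₃ = i₄ then 1 else 0) + (if i₁ = i₃ ∧ i₂ = i₄ then 1 else 0) +
          (if i₁ = i₄ ∧ i₂ = i₃ then 1 else 0)) := by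
        refine sum_le_sum fun i₁ _ => sum_le_sum fun i₂ _ => sum_le_sum fun i₃ _ =>
          sum_le_sum fun i₄ _ => ?_
        by_cases h : p i₁ i₂ i₃ i₄
        · rw [if_pos h, mul_one]
          refine (le_abs_self _).trans (le_mul_of_one_le_right (abs_nonneg _) ?_)
          rcases hp _ _ _ _ h with h' | h' | h' <;>
            simp only [h', and_self, if_true] <;> split_ifs <;> norm_num
        · rw [if_neg h, mul_zero]
          positivity
    _ = _ := by
        simp [mul_add, sum_add_distrib, ite_and, sum_ite_eq, sum_ite_irrel]

lemma integrable_mul_mul_mul_of_abs_le_one {Ω ι : Type*} [MeasurableSpace Ω] {P : Measure Ω}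
    [IsFiniteMeasure P] {δ : ι → Ω → ℝ} (hmeas : ∀ i, Measurable (δ i))
    (hbound : ∀ i ω, |δ i ω| ≤ 1) (i₁ i₂ i₃ i₄ : ι) :
    Integrable (fun ω => δ i₁ ω * δ i₂ ω * δ i₃ ω * δ i₄ ω) P := by
  refine .of_bound (by fun_prop) 1 (.of_forall fun ω => ?_)
  have h := fun i => abs_nonneg (δ i ω)
  simp only [Real.norm_eq_abs, abs_mul]
  exact mul_le_one₀ (mul_le_one₀ (mul_le_one₀ (hbound _ _) (h _) (hbound _ _)) (by positivity)
    (hbound _ _)) (h _) (hbound _ _)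

lemma integral_quartic_form {Ω ι : Type*} [MeasurableSpace Ω] {P : Measure Ω} [Fintype ι]
    {δ : ι → Ω → ℝ}
    (hint : ∀ i₁ i₂ i₃ i₄, Integrable (fun ω => δ i₁ ω * δ i₂ ω * δ i₃ ω * δ i₄ ω) P)
    (c : ι → ι → ι → ι → ℝ) :
    ∫ ω, ∑ i₁, ∑ i₂, ∑ i₃, ∑ i₄, c i₁ i₂ i₃ i₄ * (δ i₁ ω * δ i₂ ω * δ i₃ ω * δ i₄ ω) ∂P =
      ∑ i₁, ∑ i₂, ∑ i₃, ∑ i₄, c i₁ i₂ i₃ i₄ * ∫ ω, δ i₁ ω * δ i₂ ω * δ i₃ ω * δ i₄ ω ∂P := by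
  simp only [← integral_const_mul]
  have hcint := fun i₁ i₂ i₃ i₄ => (hint i₁ i₂ i₃ i₄).const_mul (c i₁ i₂ i₃ i₄)
  rw [integral_finsetSum _ fun _ _ => by fun_prop]
  refine sum_congr rfl fun i₁ _ => ?_
  rw [integral_finsetSum _ fun _ _ => by fun_prop]
  refine sum_congr rfl fun i₂ _ => ?_
  rw [integral_finsetSum _ fun _ _ => by fun_prop]
  refine sum_congr rfl fun i₃ _ => ?_
  rw [integral_finsetSum _ fun _ _ => by fun_prop]

lemma sum_sq_sum_mul_eq_sum_sum_gram {ι κ : Type*} [Fintype ι] [Fintype κ] (a : ι → ℝ)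
    (v : Matrix ι κ ℝ) :
    ∑ j, (∑ i, a i * v i j) ^ 2 = ∑ i, ∑ i', a i * a i' * (v * vᵀ) i i' := by
  simp only [mul_apply, transpose_apply]
  calc _ = ∑ j, ∑ i, ∑ i', a i * a i' * (v i j * v i' j) :=
        sum_congr rfl fun j _ => by
          rw [sq, sum_mul_sum]
          exact sum_congr rfl fun i _ => sum_congr rfl fun i' _ => by ring
    _ = _ := by
        simp_rw [mul_sum]
        rw [sum_comm]
        exact sum_congr rfl fun i _ => sum_comm

lemma sum_sq_mul_sum_sq_eq_quartic_form {ι κ : Type*} [Fintype ι] [Fintype κ]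
    (x y s : ι → ℝ) (v : Matrix ι κ ℝ) :
    (∑ j, (∑ i, x i * s i * v i j) ^ 2) * (∑ j, (∑ i, y i * s i * v i j) ^ 2) =
      ∑ i₁, ∑ i₂, ∑ i₃, ∑ i₄, x i₁ * x i₂ * y i₃ * y i₄ * ((v * vᵀ) i₁ i₂ * (v * vᵀ) i₃ i₄) *
        (s i₁ * s i₂ * s i₃ * s i₄) := by
  rw [sum_sq_sum_mul_eq_sum_sum_gram (fun i => x i * s i) v,
    sum_sq_sum_mul_eq_sum_sum_gram (fun i => y i * s i) v]
  simp_rw [sum_mul, mul_sum]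
  exact sum_congr rfl fun _ _ => sum_congr rfl fun _ _ => sum_congr rfl fun _ _ =>
    sum_congr rfl fun _ _ => by ring

lemma mul_transpose_self_apply_self {ι κ : Type*} [Fintype κ] (v : Matrix ι κ ℝ) (i : ι) :
    (v * vᵀ) i i = ∑ j, v i j ^ 2 := by
  simp only [mul_apply, transpose_apply, sq]

lemma sum_sum_sq_mul_transpose_self_le {ι κ : Type*} [Fintype ι] [Fintype κ]
    (v : Matrix ι κ ℝ) :
    ∑ i, ∑ k, (v * vᵀ) i k ^ 2 ≤ (∑ i, ∑ j, v i j ^ 2) ^ 2 := by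
  calc _ ≤ ∑ i, ∑ k, (∑ j, v i j ^ 2) * ∑ j, v k j ^ 2 :=
        sum_le_sum fun i _ => sum_le_sum fun k _ => by
          simpa only [mul_apply, transpose_apply] using sum_mul_sq_le_sq_mul_sq _ _ _
    _ = _ := by rw [sq, sum_mul_sum]

lemma sum_abs_gram_pairings_le {ι κ : Type*} [Fintype ι] [Fintype κ] (v : Matrix ι κ ℝ) :
    ∑ i, ∑ k, |(v * vᵀ) i i * (v * vᵀ) k k| + ∑ i, ∑ k, |(v * vᵀ) i k * (v * vᵀ) i k| +
        ∑ i, ∑ k, |(v * vᵀ) i k * (v * vᵀ) k i| ≤ 3 * (∑ i, ∑ j, v i j ^ 2) ^ 2 := by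
  have hsymm : ∀ i k, (v * vᵀ) k i = (v * vᵀ) i k := fun i k => by
    rw [← transpose_apply (v * vᵀ), transpose_mul, transpose_transpose]
  have hdiag_nonneg : ∀ i, 0 ≤ (v * vᵀ) i i := fun i => by
    rw [mul_transpose_self_apply_self]; positivity
  have hdiag : ∑ i, ∑ k, |(v * vᵀ) i i * (v * vᵀ) k k| = (∑ i, ∑ j, v i j ^ 2) ^ 2 := by
    simp_rw [abs_of_nonneg (mul_nonneg (hdiag_nonneg _) (hdiag_nonneg _)), ← sum_mul_sum, ← sq,
      mul_transpose_self_apply_self]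
  have hoff := sum_sum_sq_mul_transpose_self_le v
  simp only [hsymm _ (_ : ι), ← sq, abs_sq, hdiag]
  linarith

lemma abs_entry_mul_mul_mul_of_eq_or_eq_neg {ι κ : Type*} {n : ℕ} (H : Matrix ι κ ℝ)
    (hH : ∀ r i, H r i = 1 / Real.sqrt n ∨ H r i = -(1 / Real.sqrt n))
    (r₁ r₂ r₃ r₄ : ι) (i₁ i₂ i₃ i₄ : κ) :
    |H r₁ i₁ * H r₂ i₂ * H r₃ i₃ * H r₄ i₄| = 1 / (n : ℝ) ^ 2 := by
  have habs : ∀ r i, |H r i| = 1 / Real.sqrt n := fun r i => by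
    rcases hH r i with h | h <;> simp [h]
  calc _ = 1 / (Real.sqrt n * Real.sqrt n) ^ 2 := by
        rw [abs_mul, abs_mul, abs_mul, habs, habs, habs, habs]; ring
    _ = _ := by rw [Real.mul_self_sqrt (Nat.cast_nonneg n)]

theorem BRHT_block_second_moment_general {Ω : Type*} [MeasurableSpace Ω] (P : Measure Ω)
    [IsProbabilityMeasure P] (b L : ℕ)
    (δ : Fin b → Ω → ℝ) (hmeas : ∀ i, Measurable (δ i))
    (hsign : ∀ i ω, δ i ω = 1 ∨ δ i ω = -1)
    (h4wise : ∀ i₁ i₂ i₃ i₄ : Fin b,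
      ∫ ω, δ i₁ ω * δ i₂ ω * δ i₃ ω * δ i₄ ω ∂P =
        if ∀ x, Even (({i₁, i₂, i₃, i₄} : Multiset (Fin b)).count x) then 1 else 0)
    (μ : Fin b → Fin L → ℝ) (ρ : ℝ) (hρ : ρ ^ 2 = ∑ i, ∑ j, μ i j ^ 2)
    (H : Matrix (Fin b) (Fin b) ℝ)
    (hHent : ∀ r i, H r i = 1 / Real.sqrt b ∨ H r i = -(1 / Real.sqrt b))
    (r₁ r₂ : Fin b) :
    ∫ ω, (∑ j, (∑ i, H r₁ i * δ i ω * μ i j) ^ 2) *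
          (∑ j, (∑ i, H r₂ i * δ i ω * μ i j) ^ 2) ∂P ≤ 3 * ρ ^ 4 / b ^ 2 := by
  set M : Matrix (Fin b) (Fin L) ℝ := μ
  set c : Fin b → Fin b → Fin b → Fin b → ℝ := fun i₁ i₂ i₃ i₄ =>
    H r₁ i₁ * H r₁ i₂ * H r₂ i₃ * H r₂ i₄ * ((M * Mᵀ) i₁ i₂ * (M * Mᵀ) i₃ i₄)
  have hint := integrable_mul_mul_mul_of_abs_le_one (P := P) hmeas fun i ω => by
    rcases hsign i ω with h | h <;> simp [h]
  calc _ = ∑ i₁, ∑ i₂, ∑ i₃, ∑ i₄, c i₁ i₂ i₃ i₄ *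
        (if ∀ x, Even (({i₁, i₂, i₃, i₄} : Multiset (Fin b)).count x) then 1 else 0) := by
        simp_rw [sum_sq_mul_sum_sq_eq_quartic_form (H r₁) (H r₂) (δ · _) M,
          integral_quartic_form hint, h4wise]
        rfl
    _ ≤ ∑ i, ∑ k, |c i i k k| + ∑ i, ∑ k, |c i k i k| + ∑ i, ∑ k, |c i k k i| :=
        sum_mul_ite_le_sum_abs_pairings _ pairs_up_of_even_count c
    _ = 1 / (b : ℝ) ^ 2 * (∑ i, ∑ k, |(M * Mᵀ) i i * (M * Mᵀ) k k| +
          ∑ i, ∑ k, |(M * Mᵀ) i k * (M * Mᵀ) i k| + ∑ i, ∑ k, |(M * Mᵀ) i k * (M * Mᵀ) k i|) := by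
        simp only [c, abs_mul (_ * _ * _ * _), abs_entry_mul_mul_mul_of_eq_or_eq_neg H hHent, ← mul_sum,
          mul_add]
    _ ≤ 1 / (b : ℝ) ^ 2 * (3 * (ρ ^ 2) ^ 2) := by
        rw [hρ]; gcongr; exact sum_abs_gram_pairings_le M
    _ = 3 * ρ ^ 4 / b ^ 2 := by ring

/-- Let `δ_1, …, δ_b` be 4-wise independent Rademacher random variables (so that
`E[δ_{i₁}δ_{i₂}δ_{i₃}δ_{i₄}] = 1` if the multiset of indices pairs up evenly and `0`
otherwise), `μ_1, …, μ_b ∈ ℝ^L` with `Σ_i ‖μ_i‖² = ρ²`, and `H` an orthogonal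
`b × b` matrix with all entries `±1/√b`. For `Z_r = ‖Σ_i H_{r,i} δ_i μ_i‖²`,
one has `E[Z_{r₁} Z_{r₂}] ≤ 3ρ⁴/b²` for all `r₁, r₂`. -/
theorem BRHT_block_second_moment {Ω : Type*} [MeasurableSpace Ω] (P : Measure Ω)
    [IsProbabilityMeasure P] (b L : ℕ) (hb : 0 < b)
    (δ : Fin b → Ω → ℝ) (hmeas : ∀ i, Measurable (δ i))
    (hsign : ∀ i ω, δ i ω = 1 ∨ δ i ω = -1)
    (h4wise : ∀ i₁ i₂ i₃ i₄ : Fin b,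
      ∫ ω, δ i₁ ω * δ i₂ ω * δ i₃ ω * δ i₄ ω ∂P =
        if ∀ x, Even (({i₁, i₂, i₃, i₄} : Multiset (Fin b)).count x) then 1 else 0)
    (μ : Fin b → Fin L → ℝ) (ρ : ℝ) (hρ : ρ ^ 2 = ∑ i, ∑ j, μ i j ^ 2)
    (H : Matrix (Fin b) (Fin b) ℝ) (hHorth : H * H.transpose = 1)
    (hHent : ∀ r i, H r i = 1 / Real.sqrt b ∨ H r i = -(1 / Real.sqrt b))
    (r₁ r₂ : Fin b) :
    ∫ ω, (∑ j, (∑ i, H r₁ i * δ i ω * μ i j) ^ 2) *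
          (∑ j, (∑ i, H r₂ i * δ i ω * μ i j) ^ 2) ∂P ≤ 3 * ρ ^ 4 / b ^ 2 :=
  BRHT_block_second_moment_general P b L δ hmeas hsign h4wise μ ρ hρ H hHent r₁ r₂
end

section
/- (d,L)-compression: let R = H_d D be a (d,L)-BRHT with b = d/L blocks using 4-wise independent Rademacher signs. Then for every μ ∈ ℝ^d and every integer t with 1 ≤ t ≤ b, Pr[‖(Rμ)_{[1:tL]}‖² ≥ (1/100)·(tL/d)·‖μ‖²] ≥ 8/25, where (v)_{[1:m]} denotes the vector of the first m coordinates of v. -/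
open MeasureTheory

/-- The normalized Sylvester Hadamard matrix `H_{2^k}`, defined recursively by
`H_1 = [1]` and `H_{2d} = (1/√2) [[H_d, H_d], [H_d, -H_d]]`. -/
noncomputable def sylvesterHadamard : (k : ℕ) → Matrix (Fin (2 ^ k)) (Fin (2 ^ k)) ℝ
  | 0 => fun _ _ => 1
  | (k + 1) =>
      Matrix.reindex (finSumFinEquiv.trans (finCongr (by ring)))
        (finSumFinEquiv.trans (finCongr (by ring)))
        ((1 / Real.sqrt 2) •
          Matrix.fromBlocks (sylvesterHadamard k) (sylvesterHadamard k)
            (sylvesterHadamard k) (-(sylvesterHadamard k)))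

/-- The block index of a coordinate `i ∈ [d]`, `d = 2^k`, for blocks of length `L ∣ d`. -/
def blockIdx (k L : ℕ) (hL : L ∣ 2 ^ k) (i : Fin (2 ^ k)) : Fin (2 ^ k / L) :=
  ⟨i.val / L, Nat.div_lt_div_of_lt_of_dvd hL i.isLt⟩

open Finset
open scoped Matrix

/-!
Restricted to the first `tL` rows, `‖(Rμ)_{[1:tL]}‖²` is the quadratic form
`Y = ∑_j (∑_β B_{jβ} δ_β)²` in the block signs, where `B_{jβ}` is row `j` of `H_d` applied to
the part of `μ` supported on block `β`. Writing `d = 2^(c+m)`, `L = 2^c`, the Sylvester matrix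
factors as `H_{2^m} ⊗ H_{2^c}`, so two columns from the same block are orthogonal on the first
`tL` rows and each has squared norm `tL/d` there; hence `E Y = (tL/d)‖μ‖²`. Four-wise
independence of the signs gives `E Y² ≤ 3 (E Y)²`, and the Paley–Zygmund inequality with
`θ = 1/100` bounds the probability below by `(99/100)²/3 > 8/25`.
-/

lemma sq_integral_indicator_le {Ω : Type*} [MeasurableSpace Ω] {P : Measure Ω}
    [IsFiniteMeasure P] {X : Ω → ℝ} (hX2 : Integrable (fun ω => X ω ^ 2) P)
    (hXi : Integrable X P) {E : Set Ω} (hE : MeasurableSet E) :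
    (∫ ω, E.indicator X ω ∂P) ^ 2 ≤ P.real E * ∫ ω, X ω ^ 2 ∂P := by
  have h1E : Integrable (E.indicator fun _ => (1 : ℝ)) P := (integrable_const 1).indicator hE
  have hquad : ∀ x : ℝ, 0 ≤ P.real E * (x * x) + (-2 * ∫ ω, E.indicator X ω ∂P) * x
      + ∫ ω, X ω ^ 2 ∂P := by
    intro x
    have hpt : ∀ ω, 0 ≤ E.indicator (fun _ => (1 : ℝ)) ω * (x * x)
        + (-2 * x) * E.indicator X ω + X ω ^ 2 := by
      intro ω
      by_cases hω : ω ∈ E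
      · simp only [Set.indicator_of_mem hω]; nlinarith [sq_nonneg (X ω - x)]
      · simp only [Set.indicator_of_notMem hω]; nlinarith [sq_nonneg (X ω)]
    calc 0 ≤ ∫ ω, E.indicator (fun _ => (1 : ℝ)) ω * (x * x)
          + (-2 * x) * E.indicator X ω + X ω ^ 2 ∂P := integral_nonneg hpt
      _ = _ := by
        rw [integral_add, integral_add, integral_mul_const, integral_const_mul,
          integral_indicator_const _ hE, smul_eq_mul, mul_one]
        · ring
        · exact h1E.mul_const _
        · exact (hXi.indicator hE).const_mul _
        · exact (h1E.mul_const _).add ((hXi.indicator hE).const_mul _)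
        · exact hX2
  have := discrim_le_zero hquad
  rw [discrim] at this
  nlinarith

theorem paley_zygmund {Ω : Type*} [MeasurableSpace Ω] {P : Measure Ω} [IsProbabilityMeasure P]
    {X : Ω → ℝ} (hX : 0 ≤ X) (hXm : Measurable X) (hX2 : Integrable (fun ω => X ω ^ 2) P)
    {θ : ℝ} (hθ₀ : 0 ≤ θ) (hθ₁ : θ ≤ 1) :
    ((1 - θ) * ∫ ω, X ω ∂P) ^ 2 ≤
      P.real {ω | θ * ∫ ω, X ω ∂P ≤ X ω} * ∫ ω, X ω ^ 2 ∂P := by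
  have hXi : Integrable X P :=
    ((memLp_two_iff_integrable_sq hXm.aestronglyMeasurable).2 hX2).integrable one_le_two
  set E := {ω | θ * ∫ ω, X ω ∂P ≤ X ω}
  have hE : MeasurableSet E := measurableSet_le measurable_const hXm
  have hmean : 0 ≤ ∫ ω, X ω ∂P := integral_nonneg hX
  have htail : (1 - θ) * ∫ ω, X ω ∂P ≤ ∫ ω, E.indicator X ω ∂P := by
    have hpt : ∀ ω, X ω ≤ E.indicator X ω + θ * ∫ ω, X ω ∂P := by
      intro ω
      by_cases hω : ω ∈ E
      · rw [Set.indicator_of_mem hω]; nlinarith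
      · rw [Set.indicator_of_notMem hω, zero_add]; exact (not_le.1 hω).le
    have := integral_mono hXi ((hXi.indicator hE).add (integrable_const _)) hpt
    simp only [Pi.add_apply] at this
    rw [integral_add (hXi.indicator hE) (integrable_const _), integral_const, probReal_univ,
      one_smul] at this
    linarith
  calc ((1 - θ) * ∫ ω, X ω ∂P) ^ 2 ≤ (∫ ω, E.indicator X ω ∂P) ^ 2 :=
        pow_le_pow_left₀ (mul_nonneg (by linarith) hmean) htail 2
    _ ≤ _ := sq_integral_indicator_le hX2 hXi hE

lemma forall_even_count_iff_pairing {α : Type*} [DecidableEq α] (a b c d : α) :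
    (∀ x, Even (({a, b, c, d} : Multiset α).count x)) ↔
      (a = b ∧ c = d) ∨ (a = c ∧ b = d) ∨ (a = d ∧ b = c) := by
  simp only [Multiset.insert_eq_cons, Multiset.count_cons, Multiset.count_singleton]
  constructor
  · intro h
    have ha := h a
    have hb := h b
    have hc := h c
    have hd := h d
    rcases eq_or_ne a b with h1 | h1 <;> rcases eq_or_ne a c with h2 | h2 <;>
      rcases eq_or_ne a d with h3 | h3 <;> rcases eq_or_ne b c with h4 | h4 <;>
      rcases eq_or_ne b d with h5 | h5 <;> rcases eq_or_ne c d with h6 | h6 <;>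
      simp_all [Nat.even_iff]
    all_goals omega
  · rintro (⟨rfl, rfl⟩ | ⟨rfl, rfl⟩ | ⟨rfl, rfl⟩) x <;> split_ifs <;> simp_all [Nat.even_iff]

lemma ite_pairing_eq {α : Type*} [DecidableEq α] (a b c d : α) :
    (if (a = b ∧ c = d) ∨ (a = c ∧ b = d) ∨ (a = d ∧ b = c) then (1 : ℝ) else 0) =
      (if a = b ∧ c = d then 1 else 0) + (if a = c ∧ b = d then 1 else 0) +
        (if a = d ∧ b = c then 1 else 0) - 2 * (if a = b ∧ a = c ∧ a = d then 1 else 0) := by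
  by_cases h1 : a = b <;> by_cases h2 : a = c <;> by_cases h3 : a = d <;>
    by_cases h4 : b = c <;> by_cases h5 : b = d <;> by_cases h6 : c = d <;> simp_all
  all_goals norm_num

lemma sum_mul_ite_pairing {ι : Type*} [Fintype ι] [DecidableEq ι] (u v : ι → ℝ) :
    ∑ a, ∑ b, ∑ c, ∑ d, u a * u b * v c * v d *
        (if (a = b ∧ c = d) ∨ (a = c ∧ b = d) ∨ (a = d ∧ b = c) then 1 else 0) =
      (∑ a, u a ^ 2) * (∑ a, v a ^ 2) + 2 * (∑ a, u a * v a) ^ 2 -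
        2 * ∑ a, u a ^ 2 * v a ^ 2 := by
  simp only [ite_pairing_eq, mul_sub, mul_add, sum_add_distrib, sum_sub_distrib, ite_and,
    mul_ite, mul_one, mul_zero, sum_ite_eq, mem_univ, if_true, sum_ite_irrel, sum_const_zero]
  have hprod : ∑ a, ∑ b, u a * u a * v b * v b = (∑ a, u a ^ 2) * ∑ a, v a ^ 2 := by
    rw [sum_mul_sum]; exact sum_congr rfl fun _ _ => sum_congr rfl fun _ _ => by ring
  have hcross : ∑ a, ∑ b, u a * u b * v a * v b = (∑ a, u a * v a) ^ 2 := by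
    rw [sq, sum_mul_sum]; exact sum_congr rfl fun _ _ => sum_congr rfl fun _ _ => by ring
  have hcross' : ∑ a, ∑ b, u a * u b * v b * v a = (∑ a, u a * v a) ^ 2 := by
    rw [← hcross]; exact sum_congr rfl fun _ _ => sum_congr rfl fun _ _ => by ring
  have hdiag : ∑ a, u a * u a * v a * v a = ∑ a, u a ^ 2 * v a ^ 2 :=
    sum_congr rfl fun _ _ => by ring
  rw [hprod, hcross, hcross', ← sum_mul, hdiag]
  ring

structure IsFourwiseRademacher {Ω ι : Type*} [MeasurableSpace Ω] [Fintype ι] [DecidableEq ι]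
    (P : Measure Ω) (δ : ι → Ω → ℝ) : Prop where
  measurable : ∀ a, Measurable (δ a)
  sign : ∀ a ω, δ a ω = 1 ∨ δ a ω = -1
  integral_mul_mul_mul : ∀ a b c d, ∫ ω, δ a ω * δ b ω * δ c ω * δ d ω ∂P =
    if ∀ x, Even (({a, b, c, d} : Multiset ι).count x) then 1 else 0

namespace IsFourwiseRademacher

variable {Ω ι κ : Type*} [MeasurableSpace Ω] [Fintype ι] [DecidableEq ι] {P : Measure Ω}
  {δ : ι → Ω → ℝ}

lemma abs_eq_one (h : IsFourwiseRademacher P δ) (a : ι) (ω : Ω) : |δ a ω| = 1 := by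
  rcases h.sign a ω with h | h <;> simp [h]

lemma abs_sum_mul_le (h : IsFourwiseRademacher P δ) (u : ι → ℝ) (ω : Ω) :
    |∑ a, u a * δ a ω| ≤ ∑ a, |u a| :=
  (abs_sum_le_sum_abs _ _).trans_eq (by simp [abs_mul, h.abs_eq_one])

lemma integral_mul_mul_mul_eq_ite_pairing (h : IsFourwiseRademacher P δ) (a b c d : ι) :
    ∫ ω, δ a ω * δ b ω * δ c ω * δ d ω ∂P =
      if (a = b ∧ c = d) ∨ (a = c ∧ b = d) ∨ (a = d ∧ b = c) then 1 else 0 := by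
  rw [h.integral_mul_mul_mul]
  exact if_congr (forall_even_count_iff_pairing a b c d) rfl rfl

lemma integral_mul (h : IsFourwiseRademacher P δ) (a b : ι) :
    ∫ ω, δ a ω * δ b ω ∂P = if a = b then 1 else 0 := by
  have hsq : ∀ ω, δ a ω * δ b ω = δ a ω * δ b ω * δ b ω * δ b ω := fun ω => by
    rcases h.sign b ω with hb | hb <;> rw [hb] <;> ring
  rw [integral_congr_ae (.of_forall hsq), h.integral_mul_mul_mul_eq_ite_pairing]
  exact if_congr (by tauto) rfl rfl

variable [IsFiniteMeasure P]

lemma integrable_mul (h : IsFourwiseRademacher P δ) (a b : ι) :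
    Integrable (fun ω => δ a ω * δ b ω) P :=
  .of_bound (by have := h.measurable; fun_prop) 1 (.of_forall fun ω => by simp [h.abs_eq_one])

lemma integrable_mul_mul_mul (h : IsFourwiseRademacher P δ) (a b c d : ι) :
    Integrable (fun ω => δ a ω * δ b ω * δ c ω * δ d ω) P :=
  .of_bound (by have := h.measurable; fun_prop) 1 (.of_forall fun ω => by simp [h.abs_eq_one])

lemma integrable_sq_sum (h : IsFourwiseRademacher P δ) (u : ι → ℝ) :
    Integrable (fun ω => (∑ a, u a * δ a ω) ^ 2) P :=
  .of_bound (by have := h.measurable; fun_prop) ((∑ a, |u a|) ^ 2) (.of_forall fun ω => by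
    rw [Real.norm_eq_abs, abs_pow]; gcongr; exact h.abs_sum_mul_le u ω)

lemma integrable_sq_sum_mul_sq_sum (h : IsFourwiseRademacher P δ) (u v : ι → ℝ) :
    Integrable (fun ω => (∑ a, u a * δ a ω) ^ 2 * (∑ a, v a * δ a ω) ^ 2) P :=
  .of_bound (by have := h.measurable; fun_prop) ((∑ a, |u a|) ^ 2 * (∑ a, |v a|) ^ 2)
    (.of_forall fun ω => by
      rw [Real.norm_eq_abs, abs_mul, abs_pow, abs_pow]
      gcongr <;> exact h.abs_sum_mul_le _ ω)

lemma integral_sq_sum (h : IsFourwiseRademacher P δ) (u : ι → ℝ) :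
    ∫ ω, (∑ a, u a * δ a ω) ^ 2 ∂P = ∑ a, u a ^ 2 := by
  have hexp : ∀ ω, (∑ a, u a * δ a ω) ^ 2 = ∑ a, ∑ b, u a * u b * (δ a ω * δ b ω) := by
    intro ω
    rw [sq, sum_mul_sum]
    exact sum_congr rfl fun a _ => sum_congr rfl fun b _ => by ring
  have hterm : ∀ a b, Integrable (fun ω => u a * u b * (δ a ω * δ b ω)) P := fun a b =>
    (h.integrable_mul a b).const_mul _
  rw [integral_congr_ae (.of_forall hexp)]
  simp (disch := intro _ _; repeat (first | exact hterm .. |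
      refine integrable_finsetSum _ fun _ _ => ?_)) only
    [integral_finsetSum, integral_const_mul, h.integral_mul, mul_ite, mul_one, mul_zero,
      sum_ite_eq, mem_univ, if_true, sq]

lemma integral_sq_sum_mul_sq_sum (h : IsFourwiseRademacher P δ) (u v : ι → ℝ) :
    ∫ ω, (∑ a, u a * δ a ω) ^ 2 * (∑ a, v a * δ a ω) ^ 2 ∂P =
      (∑ a, u a ^ 2) * (∑ a, v a ^ 2) + 2 * (∑ a, u a * v a) ^ 2 -
        2 * ∑ a, u a ^ 2 * v a ^ 2 := by
  have hexp : ∀ ω, (∑ a, u a * δ a ω) ^ 2 * (∑ a, v a * δ a ω) ^ 2 =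
      ∑ a, ∑ b, ∑ c, ∑ d, u a * u b * v c * v d * (δ a ω * δ b ω * δ c ω * δ d ω) := by
    intro ω
    rw [sq, sq, sum_mul_sum, sum_mul_sum]
    simp only [sum_mul]
    simp only [mul_sum]
    exact sum_congr rfl fun a _ => sum_congr rfl fun b _ => sum_congr rfl fun c _ =>
      sum_congr rfl fun d _ => by ring
  have hterm : ∀ a b c d, Integrable
      (fun ω => u a * u b * v c * v d * (δ a ω * δ b ω * δ c ω * δ d ω)) P := fun a b c d =>
    (h.integrable_mul_mul_mul a b c d).const_mul _
  rw [integral_congr_ae (.of_forall hexp)]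
  simp (disch := intro _ _; repeat (first | exact hterm .. |
      refine integrable_finsetSum _ fun _ _ => ?_)) only
    [integral_finsetSum, integral_const_mul, h.integral_mul_mul_mul_eq_ite_pairing]
  exact sum_mul_ite_pairing u v

lemma integral_sq_sum_mul_sq_sum_le (h : IsFourwiseRademacher P δ) (u v : ι → ℝ) :
    ∫ ω, (∑ a, u a * δ a ω) ^ 2 * (∑ a, v a * δ a ω) ^ 2 ∂P ≤
      3 * ((∑ a, u a ^ 2) * (∑ a, v a ^ 2)) := by
  rw [h.integral_sq_sum_mul_sq_sum]
  have hcs := sum_mul_sq_le_sq_mul_sq univ u v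
  have hdiag : 0 ≤ ∑ a, u a ^ 2 * v a ^ 2 := sum_nonneg fun a _ => by positivity
  linarith

lemma integral_sum_sq_sum (h : IsFourwiseRademacher P δ) (B : κ → ι → ℝ) (s : Finset κ) :
    ∫ ω, ∑ j ∈ s, (∑ a, B j a * δ a ω) ^ 2 ∂P = ∑ j ∈ s, ∑ a, B j a ^ 2 := by
  rw [integral_finsetSum _ fun j _ => h.integrable_sq_sum (B j)]
  exact sum_congr rfl fun j _ => h.integral_sq_sum (B j)

lemma integrable_sum_sq_sum_sq (h : IsFourwiseRademacher P δ) (B : κ → ι → ℝ)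
    (s : Finset κ) : Integrable (fun ω => (∑ j ∈ s, (∑ a, B j a * δ a ω) ^ 2) ^ 2) P := by
  simp only [sq (∑ j ∈ s, _), sum_mul_sum]
  exact integrable_finsetSum _ fun j _ => integrable_finsetSum _ fun k _ =>
    h.integrable_sq_sum_mul_sq_sum (B j) (B k)

lemma integral_sum_sq_sum_sq_le (h : IsFourwiseRademacher P δ) (B : κ → ι → ℝ)
    (s : Finset κ) :
    ∫ ω, (∑ j ∈ s, (∑ a, B j a * δ a ω) ^ 2) ^ 2 ∂P ≤ 3 * (∑ j ∈ s, ∑ a, B j a ^ 2) ^ 2 := by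
  simp only [sq (∑ j ∈ s, _), sum_mul_sum]
  rw [integral_finsetSum _ fun j _ => integrable_finsetSum _ fun k _ =>
    h.integrable_sq_sum_mul_sq_sum (B j) (B k), mul_sum]
  refine sum_le_sum fun j _ => ?_
  rw [integral_finsetSum _ fun k _ => h.integrable_sq_sum_mul_sq_sum (B j) (B k), mul_sum]
  exact sum_le_sum fun k _ => (h.integral_sq_sum_mul_sq_sum_le (B j) (B k)).trans_eq
    (by rw [sum_mul_sum])

theorem le_measureReal_sum_sq_sum [IsProbabilityMeasure P] (h : IsFourwiseRademacher P δ)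
    (B : κ → ι → ℝ) (s : Finset κ) {θ : ℝ} (hθ₀ : 0 ≤ θ) (hθ₁ : θ ≤ 1) :
    (1 - θ) ^ 2 / 3 ≤
      P.real {ω | θ * ∑ j ∈ s, ∑ a, B j a ^ 2 ≤ ∑ j ∈ s, (∑ a, B j a * δ a ω) ^ 2} := by
  set Y := fun ω => ∑ j ∈ s, (∑ a, B j a * δ a ω) ^ 2
  have hY : 0 ≤ Y := fun ω => sum_nonneg fun j _ => sq_nonneg _
  have hYm : Measurable Y := by have := h.measurable; fun_prop
  have hpz := paley_zygmund hY hYm (h.integrable_sum_sq_sum_sq B s) hθ₀ hθ₁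
  rw [h.integral_sum_sq_sum B s] at hpz
  have hF : 0 ≤ ∑ j ∈ s, ∑ a, B j a ^ 2 :=
    sum_nonneg fun j _ => sum_nonneg fun a _ => sq_nonneg _
  rcases hF.eq_or_lt with hF | hF
  · have huniv : {ω | θ * ∑ j ∈ s, ∑ a, B j a ^ 2 ≤ Y ω} = Set.univ := by
      rw [← hF, mul_zero]
      exact Set.eq_univ_of_forall hY
    rw [huniv, probReal_univ]
    nlinarith
  · have := hpz.trans (mul_le_mul_of_nonneg_left (h.integral_sum_sq_sum_sq_le B s)
      measureReal_nonneg)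
    rw [div_le_iff₀ three_pos]
    nlinarith [pow_pos hF 2]

end IsFourwiseRademacher

def finPowSplit (c m : ℕ) : Fin (2 ^ (c + m)) ≃ Fin (2 ^ m) × Fin (2 ^ c) :=
  (finCongr (by rw [pow_add, mul_comm])).trans finProdFinEquiv.symm

@[simp] lemma finPowSplit_fst_val (c m : ℕ) (i : Fin (2 ^ (c + m))) :
    ((finPowSplit c m i).1 : ℕ) = i / 2 ^ c := rfl

@[simp] lemma finPowSplit_snd_val (c m : ℕ) (i : Fin (2 ^ (c + m))) :
    ((finPowSplit c m i).2 : ℕ) = i % 2 ^ c := rfl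

lemma sylvesterHadamard_succ_apply (k : ℕ) (j i : Fin (2 ^ (k + 1))) :
    sylvesterHadamard (k + 1) j i =
      1 / √2 * (if 2 ^ k ≤ (j : ℕ) ∧ 2 ^ k ≤ (i : ℕ) then -1 else 1) *
        sylvesterHadamard k ⟨j % 2 ^ k, Nat.mod_lt _ (by positivity)⟩
          ⟨i % 2 ^ k, Nat.mod_lt _ (by positivity)⟩ := by
  set e : Fin (2 ^ k) ⊕ Fin (2 ^ k) ≃ Fin (2 ^ (k + 1)) :=
    finSumFinEquiv.trans (finCongr (by ring))
  obtain ⟨x, rfl⟩ := e.surjective j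
  obtain ⟨y, rfl⟩ := e.surjective i
  rw [sylvesterHadamard, Matrix.reindex_apply, Matrix.submatrix_apply, Equiv.symm_apply_apply,
    Equiv.symm_apply_apply]
  rcases x with a | a <;> rcases y with b | b
  all_goals simp [e, Nat.mod_eq_of_lt a.isLt, Nat.mod_eq_of_lt b.isLt, a.isLt, b.isLt]

lemma sq_sylvesterHadamard_apply (k : ℕ) (j i : Fin (2 ^ k)) :
    sylvesterHadamard k j i ^ 2 = (2 ^ k : ℝ)⁻¹ := by
  induction k with
  | zero => simp [sylvesterHadamard]
  | succ k ih =>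
    rw [sylvesterHadamard_succ_apply, mul_pow, mul_pow, ih, div_pow, Real.sq_sqrt zero_le_two]
    split_ifs <;> ring

lemma sylvesterHadamard_transpose_mul_self (k : ℕ) :
    (sylvesterHadamard k)ᵀ * sylvesterHadamard k = 1 := by
  induction k with
  | zero =>
    ext i j
    obtain rfl := Subsingleton.elim (α := Fin 1) i j
    rw [Matrix.one_apply_eq]
    show ∑ _l : Fin 1, (1 : ℝ) * 1 = 1
    simp
  | succ k ih =>
    have hsqrt : 1 / √2 * (1 / √2) * 2 = (1 : ℝ) := by
      rw [div_mul_div_comm, one_mul, Real.mul_self_sqrt zero_le_two, one_div_mul_cancel two_ne_zero]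
    rw [sylvesterHadamard, Matrix.reindex_apply, Matrix.transpose_submatrix,
      Matrix.submatrix_mul_equiv, Matrix.transpose_smul, Matrix.smul_mul, Matrix.mul_smul,
      smul_smul, Matrix.fromBlocks_transpose, Matrix.fromBlocks_multiply]
    have hblocks : Matrix.fromBlocks (1 + 1) 0 0 (1 + 1) =
        (2 : ℝ) • (1 : Matrix (Fin (2 ^ k) ⊕ Fin (2 ^ k)) (Fin (2 ^ k) ⊕ Fin (2 ^ k)) ℝ) := by
      rw [← Matrix.fromBlocks_one, Matrix.fromBlocks_smul, smul_zero, two_smul]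
    simp only [Matrix.transpose_neg, Matrix.mul_neg, Matrix.neg_mul, ih, neg_neg, add_neg_cancel,
      hblocks, smul_smul, hsqrt, one_smul, Matrix.submatrix_one_equiv]

lemma sum_sylvesterHadamard_mul (k : ℕ) (i i' : Fin (2 ^ k)) :
    ∑ j, sylvesterHadamard k j i * sylvesterHadamard k j i' = if i = i' then 1 else 0 := by
  simpa [Matrix.mul_apply, Matrix.one_apply] using
    congrFun (congrFun (sylvesterHadamard_transpose_mul_self k) i) i'

lemma sylvesterHadamard_add_apply (c m : ℕ) (j i : Fin (2 ^ (c + m))) :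
    sylvesterHadamard (c + m) j i =
      sylvesterHadamard m (finPowSplit c m j).1 (finPowSplit c m i).1 *
        sylvesterHadamard c (finPowSplit c m j).2 (finPowSplit c m i).2 := by
  induction m with
  | zero =>
    have hlow : ∀ x : Fin (2 ^ c), (finPowSplit c 0 x).2 = x :=
      fun x => Fin.ext (Nat.mod_eq_of_lt x.isLt)
    rw [hlow j, hlow i]
    simp [sylvesterHadamard]
  | succ m ih =>
    have hc : (2 : ℕ) ^ (c + m) = 2 ^ c * 2 ^ m := pow_add 2 c m
    have hhigh : ∀ x : Fin (2 ^ (c + (m + 1))),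
        (finPowSplit c m ⟨x % 2 ^ (c + m), Nat.mod_lt _ (by positivity)⟩).1 =
          ⟨(finPowSplit c (m + 1) x).1 % 2 ^ m, Nat.mod_lt _ (by positivity)⟩ :=
      fun x => Fin.ext (by simp [hc, Nat.mod_mul_right_div_self])
    have hlow : ∀ x : Fin (2 ^ (c + (m + 1))),
        (finPowSplit c m ⟨x % 2 ^ (c + m), Nat.mod_lt _ (by positivity)⟩).2 =
          (finPowSplit c (m + 1) x).2 :=
      fun x => Fin.ext (by simp [Nat.mod_mod_of_dvd _ (Dvd.intro _ hc.symm)])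
    have htop : ∀ x : Fin (2 ^ (c + (m + 1))),
        2 ^ (c + m) ≤ (x : ℕ) ↔ 2 ^ m ≤ ((finPowSplit c (m + 1) x).1 : ℕ) := fun x => by
      rw [finPowSplit_fst_val, Nat.le_div_iff_mul_le (by positivity), ← pow_add, add_comm m c]
    rw [show sylvesterHadamard (c + (m + 1)) j i = sylvesterHadamard (c + m + 1) j i from rfl,
      sylvesterHadamard_succ_apply, ih, sylvesterHadamard_succ_apply, hhigh, hhigh, hlow, hlow]
    simp only [htop]
    ring

lemma sum_sylvesterHadamard_mul_of_div_eq (c m t : ℕ) (ht : t ≤ 2 ^ m)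
    (i i' : Fin (2 ^ (c + m))) (hblock : (i : ℕ) / 2 ^ c = i' / 2 ^ c) :
    ∑ j ∈ univ.filter (fun j : Fin (2 ^ (c + m)) => (j : ℕ) < t * 2 ^ c),
        sylvesterHadamard (c + m) j i * sylvesterHadamard (c + m) j i' =
      if i = i' then (t * 2 ^ c : ℝ) / 2 ^ (c + m) else 0 := by
  set e := finPowSplit c m
  have hhigh : (e i).1 = (e i').1 := Fin.ext hblock
  have hrow : ∀ j, sylvesterHadamard (c + m) j i * sylvesterHadamard (c + m) j i' =
      (2 ^ m : ℝ)⁻¹ *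
        (sylvesterHadamard c (e j).2 (e i).2 * sylvesterHadamard c (e j).2 (e i').2) := by
    intro j
    rw [sylvesterHadamard_add_apply, sylvesterHadamard_add_apply, hhigh,
      ← sq_sylvesterHadamard_apply m (e j).1 (e i').1]
    ring
  have hrows : ∀ j, j ∈ univ.filter (fun j : Fin (2 ^ (c + m)) => (j : ℕ) < t * 2 ^ c) ↔
      e j ∈ univ.filter (fun a : Fin (2 ^ m) => (a : ℕ) < t) ×ˢ univ := by
    simp [e, Nat.div_lt_iff_lt_mul]
  have hlow : (e i).2 = (e i').2 ↔ i = i' := by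
    rw [← e.injective.eq_iff, Prod.ext_iff, hhigh]
    simp
  rw [sum_equiv e hrows (g := fun p => (2 ^ m : ℝ)⁻¹ *
      (sylvesterHadamard c p.2 (e i).2 * sylvesterHadamard c p.2 (e i').2)) fun j _ => hrow j,
    sum_product]
  simp only [← mul_sum, sum_sylvesterHadamard_mul, sum_const, Fin.card_filter_val_lt,
    min_eq_right ht, hlow, nsmul_eq_mul, mul_ite, mul_one, mul_zero]
  split_ifs
  · rw [pow_add]; field_simp
  · rfl

lemma sum_sum_sq_sum_fiber {ι κ β : Type*} [Fintype ι] [DecidableEq ι] [Fintype β]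
    [DecidableEq β] (H : κ → ι → ℝ) (s : Finset κ) (f : ι → β) (r : ℝ)
    (horth : ∀ i i', f i = f i' → ∑ j ∈ s, H j i * H j i' = if i = i' then r else 0)
    (μ : ι → ℝ) :
    ∑ j ∈ s, ∑ b, (∑ i with f i = b, H j i * μ i) ^ 2 = r * ∑ i, μ i ^ 2 := by
  have hfiber : ∀ b, ∑ j ∈ s, (∑ i with f i = b, H j i * μ i) ^ 2 =
      ∑ i with f i = b, r * μ i ^ 2 := by
    intro b
    calc ∑ j ∈ s, (∑ i with f i = b, H j i * μ i) ^ 2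
        = ∑ i with f i = b, ∑ i' with f i' = b, μ i * μ i' * ∑ j ∈ s, H j i * H j i' := by
          simp only [sq, sum_mul_sum]
          rw [sum_comm]
          refine sum_congr rfl fun i _ => ?_
          rw [sum_comm]
          exact sum_congr rfl fun i' _ => by rw [mul_sum]; exact sum_congr rfl fun j _ => by ring
      _ = ∑ i with f i = b, r * μ i ^ 2 := by
          refine sum_congr rfl fun i hi => ?_
          rw [sum_congr rfl fun i' hi' => by
            rw [horth i i' ((mem_filter.1 hi).2.trans (mem_filter.1 hi').2.symm)]]
          simp [mul_ite, hi, sq, mul_comm]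
  rw [sum_comm, sum_congr rfl fun b _ => hfiber b, sum_fiberwise, mul_sum]

theorem BRHT_compression_general {Ω : Type*} [MeasurableSpace Ω] (P : Measure Ω)
    [IsProbabilityMeasure P] (k L : ℕ) (hL : L ∣ 2 ^ k)
    (δ : Fin (2 ^ k / L) → Ω → ℝ) (hmeas : ∀ i, Measurable (δ i))
    (hsign : ∀ i ω, δ i ω = 1 ∨ δ i ω = -1)
    (h4wise : ∀ i₁ i₂ i₃ i₄ : Fin (2 ^ k / L),
      ∫ ω, δ i₁ ω * δ i₂ ω * δ i₃ ω * δ i₄ ω ∂P =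
        if ∀ x, Even (({i₁, i₂, i₃, i₄} : Multiset (Fin (2 ^ k / L))).count x)
        then 1 else 0)
    (μ : Fin (2 ^ k) → ℝ) (t : ℕ) (ht₂ : t ≤ 2 ^ k / L) :
    (8 / 25 : ENNReal) ≤
      P {ω | (1 / 100 : ℝ) * ((t * L : ℝ) / 2 ^ k) * (∑ i, μ i ^ 2) ≤
        ∑ j ∈ Finset.univ.filter (fun j : Fin (2 ^ k) => (j : ℕ) < t * L),
          (∑ i, sylvesterHadamard k j i * δ (blockIdx k L hL i) ω * μ i) ^ 2} := by
  obtain ⟨c, hck, rfl⟩ := (Nat.dvd_prime_pow Nat.prime_two).mp hL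
  obtain ⟨m, rfl⟩ : ∃ m, k = c + m := ⟨k - c, by omega⟩
  have htm : t ≤ 2 ^ m := by rwa [Nat.pow_div hck two_pos, Nat.add_sub_cancel_left] at ht₂
  set blk := blockIdx (c + m) (2 ^ c) hL
  set B : Fin (2 ^ (c + m)) → Fin (2 ^ (c + m) / 2 ^ c) → ℝ :=
    fun j β => ∑ i with blk i = β, sylvesterHadamard (c + m) j i * μ i
  have hnorm := sum_sum_sq_sum_fiber (sylvesterHadamard (c + m))
    (univ.filter fun j : Fin (2 ^ (c + m)) => (j : ℕ) < t * 2 ^ c) blk _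
    (fun i i' h => sum_sylvesterHadamard_mul_of_div_eq c m t htm i i' (congrArg Fin.val h)) μ
  have hrow : ∀ j ω, ∑ i, sylvesterHadamard (c + m) j i * δ (blk i) ω * μ i =
      ∑ β, B j β * δ β ω := fun j ω => by
    rw [← sum_fiberwise univ blk]
    exact sum_congr rfl fun β _ => by
      rw [sum_mul]; exact sum_congr rfl fun i hi => by rw [(mem_filter.1 hi).2]; ring
  -- `convert` reconciles the two `Decidable` instances of the `if`
  have hδ : IsFourwiseRademacher P δ :=
    ⟨hmeas, hsign, fun a b c d => by convert h4wise a b c d⟩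
  have hbound := hδ.le_measureReal_sum_sq_sum B
    (univ.filter fun j : Fin (2 ^ (c + m)) => (j : ℕ) < t * 2 ^ c)
    (θ := 1 / 100) (by norm_num) (by norm_num)
  rw [hnorm] at hbound
  simp only [← hrow] at hbound
  rw [← ofReal_measureReal, show (8 / 25 : ENNReal) = ENNReal.ofReal (8 / 25) by
    norm_num [ENNReal.ofReal_div_of_pos]]
  refine ENNReal.ofReal_le_ofReal <| le_trans (by norm_num) (hbound.trans_eq ?_)
  push_cast
  simp only [mul_assoc]

/-- `(d, L)`-compression: let `R = H_d D` be a `(d, L)`-BRHT with `b = d/L` blocks, the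
`i`-th diagonal block of `D` being `δ_i · I_L` for 4-wise independent Rademacher signs
`δ_1, …, δ_b`. Then for every `μ ∈ ℝ^d` and every `1 ≤ t ≤ b`,
`Pr[ ‖(Rμ)_{[1:tL]}‖² ≥ (1/100)·(tL/d)·‖μ‖² ] ≥ 8/25`. -/
theorem BRHT_compression {Ω : Type*} [MeasurableSpace Ω] (P : Measure Ω)
    [IsProbabilityMeasure P] (k L : ℕ) (hL : L ∣ 2 ^ k)
    (δ : Fin (2 ^ k / L) → Ω → ℝ) (hmeas : ∀ i, Measurable (δ i))
    (hsign : ∀ i ω, δ i ω = 1 ∨ δ i ω = -1)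
    (h4wise : ∀ i₁ i₂ i₃ i₄ : Fin (2 ^ k / L),
      ∫ ω, δ i₁ ω * δ i₂ ω * δ i₃ ω * δ i₄ ω ∂P =
        if ∀ x, Even (({i₁, i₂, i₃, i₄} : Multiset (Fin (2 ^ k / L))).count x)
        then 1 else 0)
    (μ : Fin (2 ^ k) → ℝ) (t : ℕ) (ht₁ : 1 ≤ t) (ht₂ : t ≤ 2 ^ k / L) :
    (8 / 25 : ENNReal) ≤
      P {ω | (1 / 100 : ℝ) * ((t * L : ℝ) / 2 ^ k) * (∑ i, μ i ^ 2) ≤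
        ∑ j ∈ Finset.univ.filter (fun j : Fin (2 ^ k) => (j : ℕ) < t * L),
          (∑ i, sylvesterHadamard k j i * δ (blockIdx k L hL i) ω * μ i) ^ 2} :=
  BRHT_compression_general P k L hL δ hmeas hsign h4wise μ t ht₂
end

section
/- Let Z_1,…,Z_n be independent random variables with values in {−1/2, 1/2}, E[Z_k] = p_k, and suppose p_{k_1} p_{k_2} ≥ 0 for all k_1 ≠ k_2. Let T = Σ_{k_1 ≠ k_2} Z_{k_1} Z_{k_2}. Then Var(T) ≤ n(n−1)/8 + (n−2)·E[T]. -/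
/-!
Write `X_q = Z_i Z_j` for an ordered pair `q = (i, j)` with `i ≠ j`, so that
`Var T = ∑_{q, r} cov(X_q, X_r)`. Only the number of indices shared by `q` and `r` matters:
disjoint pairs are independent, so their covariance vanishes; if they share one index `m`,
with remaining indices `a ≠ b`, then `Z_m² = 1/4` gives
`cov(X_q, X_r) = (1/4 - p_m²) p_a p_b ≤ p_a p_b / 4`;
if they share both, `cov(X_q, X_r) ≤ E[X_q²] = 1/16`. Summing, the `2 n (n - 1)` pairs sharing
both indices contribute at most `n (n - 1) / 8`, and each ordered pair `(a, b)` of distinct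
indices occurs in `4 (n - 2)` configurations sharing one index, which gives `(n - 2) E[T]`.
-/

open MeasureTheory ProbabilityTheory Finset

section Counting

variable {ι : Type*} [Fintype ι]

lemma sum_offDiag_comp_swap (f : ι × ι → ℝ) :
    ∑ q ∈ univ.offDiag, f q.swap = ∑ q ∈ univ.offDiag, f q :=
  sum_nbij' Prod.swap Prod.swap (by simp [eq_comm]) (by simp [eq_comm]) (by simp) (by simp)
    (fun _ _ => rfl)

lemma card_offDiag_univ :
    (#(univ.offDiag : Finset (ι × ι)) : ℝ) = Fintype.card ι * (Fintype.card ι - 1) := by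
  rw [offDiag_card, card_univ, Nat.cast_sub (Nat.le_mul_self _)]
  push_cast
  ring

variable [DecidableEq ι]

lemma sum_offDiag_eq_sum_sum_ite (f : ι × ι → ℝ) :
    ∑ q ∈ univ.offDiag, f q = ∑ i, ∑ j, if i ≠ j then f (i, j) else 0 := by
  rw [← sum_product', ← sum_filter]
  congr 1
  ext
  simp

lemma sum_ite_ne_and_ne {j l : ι} (h : j ≠ l) (c : ℝ) :
    ∑ i : ι, (if i ≠ j ∧ i ≠ l then c else 0) = (Fintype.card ι - 2) * c := by
  have hcompl : (univ.filter fun i => i ≠ j ∧ i ≠ l) = ({j, l} : Finset ι)ᶜ := by ext; simp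
  rw [← sum_filter, hcompl, sum_const, card_compl, card_pair h, nsmul_eq_mul,
    Nat.cast_sub (by simpa [card_pair h] using card_le_univ {j, l}), Nat.cast_ofNat]

lemma sum_offDiag_sum_offDiag_fst_eq (g : ι → ι → ℝ) :
    ∑ q ∈ univ.offDiag, ∑ r ∈ univ.offDiag, (if r.1 = q.1 ∧ r.2 ≠ q.2 then g q.2 r.2 else 0)
      = ((Fintype.card ι : ℝ) - 2) * ∑ q ∈ univ.offDiag, g q.1 q.2 := by
  have inner (i j : ι) : ∑ r ∈ univ.offDiag, (if r.1 = i ∧ r.2 ≠ j then g j r.2 else 0)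
      = ∑ l, if i ≠ l ∧ l ≠ j then g j l else 0 := by
    rw [sum_offDiag_eq_sum_sum_ite, sum_eq_single i (fun k _ hk => by simp [hk]) (by simp)]
    exact sum_congr rfl fun l _ => by grind
  calc _ = ∑ i, ∑ j, ∑ l, if i ≠ j ∧ i ≠ l ∧ l ≠ j then g j l else 0 := by
        rw [sum_offDiag_eq_sum_sum_ite]
        refine sum_congr rfl fun i _ => sum_congr rfl fun j _ => ?_
        rw [inner]
        split_ifs with h <;> simp [h]
    _ = ∑ j, ∑ l, ∑ i, if i ≠ j ∧ i ≠ l ∧ l ≠ j then g j l else 0 := by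
        rw [sum_comm]
        exact sum_congr rfl fun j _ => sum_comm
    _ = _ := by
        rw [sum_offDiag_eq_sum_sum_ite, mul_sum]
        refine sum_congr rfl fun j _ => ?_
        rw [mul_sum]
        refine sum_congr rfl fun l _ => ?_
        by_cases h : j = l
        · simp [h]
        · rw [if_pos h, ← sum_ite_ne_and_ne h]
          exact sum_congr rfl fun i _ => by grind

end Counting

section CovarianceBound

variable {ι : Type*} [DecidableEq ι]

/- `pairCovBound p q r` bounds `cov(X_q, X_r)` when `r.1 = q.1`; since `X_{q.swap} = X_q`,
symmetrizing over swaps covers every overlap. This counts `r = q` twice, as `(q, q)` and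
`(q.swap, q.swap)`, hence `1 / 32` for the bound `1 / 16`. -/
noncomputable def pairCovBound (p : ι → ℝ) (q r : ι × ι) : ℝ :=
  (if r = q then 1 / 32 else 0) + if r.1 = q.1 ∧ r.2 ≠ q.2 then p q.2 * p r.2 / 4 else 0

noncomputable def symmPairCovBound (p : ι → ℝ) (q r : ι × ι) : ℝ :=
  pairCovBound p q r + pairCovBound p q r.swap + pairCovBound p q.swap r +
    pairCovBound p q.swap r.swap

lemma pairCovBound_nonneg {p : ι → ℝ} (hp : ∀ i j, i ≠ j → 0 ≤ p i * p j) (q r : ι × ι) :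
    0 ≤ pairCovBound p q r := by
  unfold pairCovBound
  split_ifs with h₁ h₂ h₂ <;> first | positivity | linarith [hp _ _ (Ne.symm h₂.2)]

variable [Fintype ι]

lemma sum_pairCovBound (p : ι → ℝ) :
    ∑ q ∈ univ.offDiag, ∑ r ∈ univ.offDiag, pairCovBound p q r
      = Fintype.card ι * (Fintype.card ι - 1) / 32 +
        ((Fintype.card ι : ℝ) - 2) / 4 * ∑ q ∈ univ.offDiag, p q.1 * p q.2 := by
  simp only [pairCovBound, sum_add_distrib, sum_ite_eq', sum_ite_mem, inter_self, sum_const,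
    nsmul_eq_mul, card_offDiag_univ, sum_offDiag_sum_offDiag_fst_eq (fun j l => p j * p l / 4),
    ← sum_div]
  ring

lemma sum_symmPairCovBound (p : ι → ℝ) :
    ∑ q ∈ univ.offDiag, ∑ r ∈ univ.offDiag, symmPairCovBound p q r
      = Fintype.card ι * (Fintype.card ι - 1) / 8 +
        ((Fintype.card ι : ℝ) - 2) * ∑ q ∈ univ.offDiag, p q.1 * p q.2 := by
  have hswap (q : ι × ι) : ∑ r ∈ univ.offDiag, pairCovBound p q r.swap =
      ∑ r ∈ univ.offDiag, pairCovBound p q r := sum_offDiag_comp_swap _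
  simp only [symmPairCovBound, sum_add_distrib, hswap, sum_pairCovBound,
    sum_offDiag_comp_swap fun q => ∑ r ∈ univ.offDiag, pairCovBound p q r]
  ring

end CovarianceBound

section Moments

variable {ι Ω : Type*} {Z : ι → Ω → ℝ}

def pairProduct (Z : ι → Ω → ℝ) (q : ι × ι) (ω : Ω) : ℝ := Z q.1 ω * Z q.2 ω

lemma pairProduct_swap (Z : ι → Ω → ℝ) (q : ι × ι) : pairProduct Z q.swap = pairProduct Z q :=
  funext fun _ => mul_comm _ _

lemma mul_self_eq_of_eq_neg_half_or_eq_half {x : ℝ} (h : x = -(1 / 2) ∨ x = 1 / 2) :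
    x * x = 1 / 4 := by
  rcases h with rfl | rfl <;> norm_num

lemma abs_pairProduct_le (hval : ∀ k ω, Z k ω = -(1 / 2) ∨ Z k ω = 1 / 2) (q : ι × ι) (ω : Ω) :
    |pairProduct Z q ω| ≤ 1 / 4 := by
  unfold pairProduct
  rcases hval q.1 ω with h₁ | h₁ <;> rcases hval q.2 ω with h₂ | h₂ <;> norm_num [h₁, h₂]

variable [MeasurableSpace Ω] {P : Measure Ω} {p : ι → ℝ}

lemma measurable_pairProduct (hmeas : ∀ k, Measurable (Z k)) (q : ι × ι) :
    Measurable (pairProduct Z q) :=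
  (hmeas q.1).mul (hmeas q.2)

lemma memLp_pairProduct [IsFiniteMeasure P] (hmeas : ∀ k, Measurable (Z k))
    (hval : ∀ k ω, Z k ω = -(1 / 2) ∨ Z k ω = 1 / 2) (q : ι × ι) :
    MemLp (pairProduct Z q) 2 P :=
  MemLp.of_bound (measurable_pairProduct hmeas q).aestronglyMeasurable (1 / 4)
    (ae_of_all _ (abs_pairProduct_le hval q))

lemma integral_pairProduct (hmeas : ∀ k, Measurable (Z k)) (hindep : iIndepFun Z P)
    (hp : ∀ k, ∫ ω, Z k ω ∂P = p k) {q : ι × ι} (hq : q.1 ≠ q.2) :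
    ∫ ω, pairProduct Z q ω ∂P = p q.1 * p q.2 := by
  rw [← hp, ← hp]
  exact (hindep.indepFun hq).integral_mul_eq_mul_integral
    (hmeas _).aestronglyMeasurable (hmeas _).aestronglyMeasurable

lemma covariance_pairProduct_of_disjoint [IsFiniteMeasure P] (hmeas : ∀ k, Measurable (Z k))
    (hval : ∀ k ω, Z k ω = -(1 / 2) ∨ Z k ω = 1 / 2) (hindep : iIndepFun Z P) {q r : ι × ι}
    (h₁₁ : q.1 ≠ r.1) (h₁₂ : q.1 ≠ r.2) (h₂₁ : q.2 ≠ r.1) (h₂₂ : q.2 ≠ r.2) :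
    cov[pairProduct Z q, pairProduct Z r; P] = 0 :=
  (hindep.indepFun_mul_mul hmeas _ _ _ _ h₁₁ h₁₂ h₂₁ h₂₂).covariance_eq_zero
    (memLp_pairProduct hmeas hval q) (memLp_pairProduct hmeas hval r)

variable [IsProbabilityMeasure P]

lemma covariance_pairProduct_self_le (hmeas : ∀ k, Measurable (Z k))
    (hval : ∀ k ω, Z k ω = -(1 / 2) ∨ Z k ω = 1 / 2) (q : ι × ι) :
    cov[pairProduct Z q, pairProduct Z q; P] ≤ 1 / 16 := by
  have hsq : pairProduct Z q ^ 2 = fun _ => 1 / 16 := funext fun ω => by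
    rw [Pi.pow_apply, pairProduct, mul_pow, sq, sq,
      mul_self_eq_of_eq_neg_half_or_eq_half (hval _ ω),
      mul_self_eq_of_eq_neg_half_or_eq_half (hval _ ω)]
    norm_num
  have hm := measurable_pairProduct hmeas q
  rw [covariance_self hm.aemeasurable]
  calc Var[pairProduct Z q; P] ≤ P[pairProduct Z q ^ 2] :=
        variance_le_expectation_sq hm.aestronglyMeasurable
    _ = 1 / 16 := by rw [hsq]; simp

lemma covariance_pairProduct_of_fst_eq (hmeas : ∀ k, Measurable (Z k))
    (hval : ∀ k ω, Z k ω = -(1 / 2) ∨ Z k ω = 1 / 2) (hindep : iIndepFun Z P)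
    (hp : ∀ k, ∫ ω, Z k ω ∂P = p k) {i j l : ι} (hij : i ≠ j) (hil : i ≠ l) (hjl : j ≠ l) :
    cov[pairProduct Z (i, j), pairProduct Z (i, l); P] = (1 / 4 - p i ^ 2) * (p j * p l) := by
  have hprod : pairProduct Z (i, j) * pairProduct Z (i, l) =
      fun ω => 1 / 4 * pairProduct Z (j, l) ω := funext fun ω => by
    rw [Pi.mul_apply, ← mul_self_eq_of_eq_neg_half_or_eq_half (hval i ω)]
    simp only [pairProduct]
    ring
  rw [covariance_eq_sub (memLp_pairProduct hmeas hval _) (memLp_pairProduct hmeas hval _), hprod,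
    integral_const_mul, integral_pairProduct hmeas hindep hp hjl,
    integral_pairProduct hmeas hindep hp hij, integral_pairProduct hmeas hindep hp hil]
  ring

variable [Fintype ι]

lemma integral_sum_offDiag_pairProduct (hmeas : ∀ k, Measurable (Z k))
    (hval : ∀ k ω, Z k ω = -(1 / 2) ∨ Z k ω = 1 / 2) (hindep : iIndepFun Z P)
    (hp : ∀ k, ∫ ω, Z k ω ∂P = p k) :
    ∫ ω, ∑ q ∈ univ.offDiag, pairProduct Z q ω ∂P = ∑ q ∈ univ.offDiag, p q.1 * p q.2 := by
  rw [integral_finsetSum _ fun q _ => (memLp_pairProduct hmeas hval q).integrable one_le_two]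
  exact sum_congr rfl fun q hq => integral_pairProduct hmeas hindep hp (mem_offDiag.1 hq).2.2

end Moments

section Variance

variable {ι Ω : Type*} [DecidableEq ι] [MeasurableSpace Ω] {P : Measure Ω}
  [IsProbabilityMeasure P] {Z : ι → Ω → ℝ} {p : ι → ℝ}

lemma covariance_pairProduct_le_of_fst_eq (hmeas : ∀ k, Measurable (Z k))
    (hval : ∀ k ω, Z k ω = -(1 / 2) ∨ Z k ω = 1 / 2) (hindep : iIndepFun Z P)
    (hp : ∀ k, ∫ ω, Z k ω ∂P = p k) (hpos : ∀ i j, i ≠ j → 0 ≤ p i * p j)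
    {q r : ι × ι} (hq : q.1 ≠ q.2) (hr : r.1 ≠ r.2) (h : r.1 = q.1) :
    cov[pairProduct Z q, pairProduct Z r; P] ≤
      pairCovBound p q r + pairCovBound p q.swap r.swap := by
  obtain ⟨i, j⟩ := q
  obtain ⟨k, l⟩ := r
  dsimp only at hq hr h
  subst h
  by_cases hlj : l = j
  · subst hlj
    have hbound : pairCovBound p (k, l) (k, l) + pairCovBound p (l, k) (l, k) = 1 / 16 := by
      norm_num [pairCovBound]
    exact hbound ▸ covariance_pairProduct_self_le hmeas hval (k, l)
  · have hbound : pairCovBound p (k, j) (k, l) = p j * p l / 4 := by simp [pairCovBound, hlj]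
    rw [covariance_pairProduct_of_fst_eq hmeas hval hindep hp hq hr (Ne.symm hlj), hbound]
    nlinarith [hpos j l (Ne.symm hlj), sq_nonneg (p k), pairCovBound_nonneg hpos (k, j).swap (k, l).swap]

lemma covariance_pairProduct_le (hmeas : ∀ k, Measurable (Z k))
    (hval : ∀ k ω, Z k ω = -(1 / 2) ∨ Z k ω = 1 / 2) (hindep : iIndepFun Z P)
    (hp : ∀ k, ∫ ω, Z k ω ∂P = p k) (hpos : ∀ i j, i ≠ j → 0 ≤ p i * p j)
    {q r : ι × ι} (hq : q.1 ≠ q.2) (hr : r.1 ≠ r.2) :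
    cov[pairProduct Z q, pairProduct Z r; P] ≤ symmPairCovBound p q r := by
  have h₀ := pairCovBound_nonneg hpos
  have hle {q' r' : ι × ι} (hq' : q'.1 ≠ q'.2) (hr' : r'.1 ≠ r'.2) (h : r'.1 = q'.1) :=
    covariance_pairProduct_le_of_fst_eq (P := P) hmeas hval hindep hp hpos hq' hr' h
  unfold symmPairCovBound
  by_cases h₁₁ : r.1 = q.1
  · linarith [hle hq hr h₁₁, h₀ q r.swap, h₀ q.swap r]
  by_cases h₂₁ : r.2 = q.1
  · have := hle (r' := r.swap) hq hr.symm h₂₁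
    rw [pairProduct_swap, Prod.swap_swap] at this
    linarith [h₀ q r, h₀ q.swap r.swap]
  by_cases h₁₂ : r.1 = q.2
  · have := hle (q' := q.swap) hq.symm hr h₁₂
    rw [pairProduct_swap, Prod.swap_swap] at this
    linarith [h₀ q r, h₀ q.swap r.swap]
  by_cases h₂₂ : r.2 = q.2
  · have := hle (q' := q.swap) (r' := r.swap) hq.symm hr.symm h₂₂
    rw [pairProduct_swap, pairProduct_swap, Prod.swap_swap, Prod.swap_swap] at this
    linarith [h₀ q r.swap, h₀ q.swap r]
  rw [covariance_pairProduct_of_disjoint hmeas hval hindep (Ne.symm h₁₁) (Ne.symm h₂₁)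
    (Ne.symm h₁₂) (Ne.symm h₂₂)]
  linarith [h₀ q r, h₀ q r.swap, h₀ q.swap r, h₀ q.swap r.swap]

variable [Fintype ι]

lemma variance_sum_offDiag_pairProduct_le (hmeas : ∀ k, Measurable (Z k))
    (hval : ∀ k ω, Z k ω = -(1 / 2) ∨ Z k ω = 1 / 2) (hindep : iIndepFun Z P)
    (hp : ∀ k, ∫ ω, Z k ω ∂P = p k) (hpos : ∀ i j, i ≠ j → 0 ≤ p i * p j) :
    Var[fun ω => ∑ q ∈ univ.offDiag, pairProduct Z q ω; P] ≤
      Fintype.card ι * (Fintype.card ι - 1) / 8 +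
        ((Fintype.card ι : ℝ) - 2) * ∑ q ∈ univ.offDiag, p q.1 * p q.2 := by
  rw [variance_fun_sum' fun q _ => memLp_pairProduct hmeas hval q, ← sum_symmPairCovBound]
  exact sum_le_sum fun q hq => sum_le_sum fun r hr =>
    covariance_pairProduct_le hmeas hval hindep hp hpos (mem_offDiag.1 hq).2.2
      (mem_offDiag.1 hr).2.2

end Variance

/-- Let `Z_1, …, Z_n` be jointly independent random variables with values in
`{−1/2, 1/2}`, `E[Z_k] = p_k`, and suppose `p_{k₁} p_{k₂} ≥ 0` for all `k₁ ≠ k₂`.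
For `T = Σ_{k₁ ≠ k₂} Z_{k₁} Z_{k₂}` (sum over ordered pairs of distinct indices),
`Var(T) ≤ n(n−1)/8 + (n−2)·E[T]`. -/
theorem testing_statistic_variance {Ω : Type*} [MeasurableSpace Ω] (P : Measure Ω)
    [IsProbabilityMeasure P] (n : ℕ) (Z : Fin n → Ω → ℝ)
    (hmeas : ∀ k, Measurable (Z k))
    (hval : ∀ k ω, Z k ω = -(1 / 2) ∨ Z k ω = 1 / 2)
    (hindep : iIndepFun Z P)
    (p : Fin n → ℝ) (hp : ∀ k, ∫ ω, Z k ω ∂P = p k)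
    (hpos : ∀ k₁ k₂ : Fin n, k₁ ≠ k₂ → 0 ≤ p k₁ * p k₂) :
    variance (fun ω => ∑ q ∈ Finset.univ.offDiag, Z q.1 ω * Z q.2 ω) P ≤
      (n : ℝ) * (n - 1) / 8 +
        ((n : ℝ) - 2) * ∫ ω, ∑ q ∈ Finset.univ.offDiag, Z q.1 ω * Z q.2 ω ∂P := by
  have hmean := integral_sum_offDiag_pairProduct hmeas hval hindep hp
  have hvar := variance_sum_offDiag_pairProduct_le hmeas hval hindep hp hpos
  rw [Fintype.card_fin] at hvar
  exact hmean ▸ hvar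
end
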